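/- arXiv:2305.02371 — 2 statements merged into one kernel-verified Lean document; each statement's English description precedes it below -/
import Mathlib

section
/- Let W be an n×n matrix with nonnegative real entries and let r ≥ 0 be a real number such that every cycle of length ℓ in the weighted digraph of W has value at most r^ℓ. Then the spectral radius of W satisfies ρ(W) ≤ n·r. (Thus, up to the factor n, the spectral radius is controlled by the geometric mean value of the dominant cycle.) -/
open Matrix BigOperators

/-- Spectral radius of a real square matrix: the supremum of the absolute values of the
complex eigenvalues (roots of the characteristic polynomial of the complexified matrix). -/
noncomputable def specRad {m : Type*} [Fintype m] [DecidableEq m] (W : Matrix m m ℝ) : ℝ :=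
  sSup {r : ℝ | ∃ μ : ℂ, (Matrix.charpoly (W.map Complex.ofReal)).IsRoot μ ∧ r = ‖μ‖}

/-- The principal submatrix of `W` obtained by deleting the rows and columns indexed by `S`. -/
def delSub {n : ℕ} (W : Matrix (Fin n) (Fin n) ℝ) (S : Finset (Fin n)) :
    Matrix {i : Fin n // i ∉ S} {i : Fin n // i ∉ S} ℝ :=
  W.submatrix Subtype.val Subtype.val

/-- A closed walk of length `m ≥ 1` in the weighted digraph of `W`. -/
def IsClosedWalk {n : ℕ} (W : Matrix (Fin n) (Fin n) ℝ) (m : ℕ) (v : ℕ → Fin n) : Prop :=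
  1 ≤ m ∧ v 0 = v m ∧ ∀ i < m, 0 < W (v i) (v (i + 1))

/-- A cycle: a closed walk whose first `m` vertices are pairwise distinct. -/
def IsCycle {n : ℕ} (W : Matrix (Fin n) (Fin n) ℝ) (m : ℕ) (v : ℕ → Fin n) : Prop :=
  IsClosedWalk W m v ∧ ∀ i < m, ∀ j < m, v i = v j → i = j

/-- The value of a walk: the product of the weights of its arcs. -/
noncomputable def walkValue {n : ℕ} (W : Matrix (Fin n) (Fin n) ℝ) (m : ℕ) (v : ℕ → Fin n) : ℝ :=
  ∏ i ∈ Finset.range m, W (v i) (v (i + 1))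

/-!
A closed walk that is not a cycle splits at a repeated vertex into two shorter closed walks, so
every closed walk of length `ℓ` has value at most `r ^ ℓ`. Cutting closed subwalks out of an
arbitrary walk leaves at most `n` arcs, so a walk of length `m + n` has value at most
`B ^ n * r ^ m`, where `B ≥ r` bounds the entries of `W`. Summing over the `n ^ (m + n + 1)`
walks bounds the entry sum of `W ^ (m + n)`, which dominates `‖μ‖ ^ (m + n)` for every eigenvalue
`μ`. Hence `‖μ‖ ^ (m + n) ≤ C * (n * r) ^ m` for all `m`, which forces `‖μ‖ ≤ n * r`.
-/

section Walks

variable {n : ℕ} {W : Matrix (Fin n) (Fin n) ℝ}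

lemma walkValue_congr {m : ℕ} {v w : ℕ → Fin n} (h : ∀ i ≤ m, v i = w i) :
    walkValue W m v = walkValue W m w :=
  Finset.prod_congr rfl fun i hi => by
    rw [Finset.mem_range] at hi
    rw [h i hi.le, h (i + 1) hi]

lemma walkValue_add (a b : ℕ) (v : ℕ → Fin n) :
    walkValue W (a + b) v = walkValue W a v * walkValue W b (fun k => v (a + k)) := by
  simp only [walkValue, Finset.prod_range_add, add_assoc]

lemma walkValue_nonneg (hW : ∀ i j, 0 ≤ W i j) (m : ℕ) (v : ℕ → Fin n) : 0 ≤ walkValue W m v :=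
  Finset.prod_nonneg fun _ _ => hW _ _

lemma walkValue_le_pow (hW : ∀ i j, 0 ≤ W i j) {B : ℝ} (hWB : ∀ i j, W i j ≤ B) (m : ℕ)
    (v : ℕ → Fin n) : walkValue W m v ≤ B ^ m := by
  simpa [walkValue] using
    Finset.prod_le_prod (s := Finset.range m) (fun _ _ => hW _ _) (fun _ _ => hWB _ _)

def cutLoop {α : Type*} (v : ℕ → α) (a ℓ : ℕ) : ℕ → α :=
  fun i => if i ≤ a then v i else v (i + ℓ)

lemma walkValue_eq_mul_cutLoop {v : ℕ → Fin n} {a ℓ : ℕ} (c : ℕ) (h : v a = v (a + ℓ)) :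
    walkValue W (a + ℓ + c) v =
      walkValue W ℓ (fun k => v (a + k)) * walkValue W (a + c) (cutLoop v a ℓ) := by
  have hhead : walkValue W a (cutLoop v a ℓ) = walkValue W a v :=
    walkValue_congr fun i hi => if_pos hi
  have htail : (fun k => cutLoop v a ℓ (a + k)) = fun k => v (a + ℓ + k) := by
    funext k
    rcases Nat.eq_zero_or_pos k with rfl | hk
    · simpa [cutLoop] using h
    · simp only [cutLoop, if_neg (by omega : ¬ a + k ≤ a)]
      congr 1; omega
  rw [walkValue_add (a + ℓ), walkValue_add a, walkValue_add a c, hhead, htail]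
  ring

variable {r : ℝ}

theorem walkValue_le_pow_of_closed (hW : ∀ i j, 0 ≤ W i j) (hr : 0 ≤ r)
    (hcyc : ∀ (ℓ : ℕ) (c : ℕ → Fin n), IsCycle W ℓ c → walkValue W ℓ c ≤ r ^ ℓ)
    {m : ℕ} {v : ℕ → Fin n} (hm : 1 ≤ m) (hv : v 0 = v m) : walkValue W m v ≤ r ^ m := by
  induction m using Nat.strong_induction_on generalizing v with
  | _ m ih =>
  by_cases hpos : ∀ i < m, 0 < W (v i) (v (i + 1))
  swap
  · push Not at hpos
    obtain ⟨i, hi, hle⟩ := hpos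
    rw [walkValue, Finset.prod_eq_zero (Finset.mem_range.2 hi) (le_antisymm hle (hW _ _))]
    positivity
  by_cases hinj : ∀ i < m, ∀ j < m, v i = v j → i = j
  · exact hcyc m v ⟨⟨hm, hv, hpos⟩, hinj⟩
  obtain ⟨a, b, hab, hbm, hvab⟩ : ∃ a b, a < b ∧ b < m ∧ v a = v b := by
    push Not at hinj
    obtain ⟨i, hi, j, hj, hvij, hij⟩ := hinj
    rcases hij.lt_or_gt with h | h
    exacts [⟨i, j, h, hj, hvij⟩, ⟨j, i, h, hi, hvij.symm⟩]
  obtain ⟨ℓ, rfl⟩ : ∃ ℓ, b = a + ℓ := ⟨b - a, by omega⟩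
  obtain ⟨c, rfl⟩ : ∃ c, m = a + ℓ + c := ⟨m - (a + ℓ), by omega⟩
  have hloop : walkValue W ℓ (fun k => v (a + k)) ≤ r ^ ℓ :=
    ih ℓ (by omega) (by omega) (by simpa using hvab)
  have hrest : walkValue W (a + c) (cutLoop v a ℓ) ≤ r ^ (a + c) := by
    refine ih (a + c) (by omega) (by omega) ?_
    simp only [cutLoop, if_pos (Nat.zero_le a), if_neg (by omega : ¬ a + c ≤ a)]
    rw [hv]; congr 1; omega
  calc walkValue W (a + ℓ + c) v
      = walkValue W ℓ (fun k => v (a + k)) * walkValue W (a + c) (cutLoop v a ℓ) :=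
        walkValue_eq_mul_cutLoop c hvab
    _ ≤ r ^ ℓ * r ^ (a + c) := mul_le_mul hloop hrest (walkValue_nonneg hW _ _) (by positivity)
    _ = r ^ (a + ℓ + c) := by ring

theorem exists_walkValue_le_pow_mul_pow (hW : ∀ i j, 0 ≤ W i j) (hr : 0 ≤ r)
    (hcyc : ∀ (ℓ : ℕ) (c : ℕ → Fin n), IsCycle W ℓ c → walkValue W ℓ c ≤ r ^ ℓ)
    {B : ℝ} (hWB : ∀ i j, W i j ≤ B) (m : ℕ) (v : ℕ → Fin n) :
    ∃ k j, k ≤ n ∧ k + j = m ∧ walkValue W m v ≤ B ^ k * r ^ j := by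
  induction m using Nat.strong_induction_on generalizing v with
  | _ m ih =>
  by_cases hmn : m ≤ n
  · exact ⟨m, 0, hmn, rfl, by simpa using walkValue_le_pow hW hWB m v⟩
  obtain ⟨a, b, hab, hbn, hvab⟩ : ∃ a b, a < b ∧ b ≤ n ∧ v a = v b := by
    obtain ⟨x, y, hxy, hv⟩ :=
      Fintype.exists_ne_map_eq_of_card_lt (fun k : Fin (n + 1) => v k) (by simp)
    rcases Fin.lt_or_lt_of_ne hxy with h | h
    exacts [⟨x, y, h, by omega, hv⟩, ⟨y, x, h, by omega, hv.symm⟩]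
  obtain ⟨ℓ, rfl⟩ : ∃ ℓ, b = a + ℓ := ⟨b - a, by omega⟩
  obtain ⟨c, rfl⟩ : ∃ c, m = a + ℓ + c := ⟨m - (a + ℓ), by omega⟩
  have hloop : walkValue W ℓ (fun k => v (a + k)) ≤ r ^ ℓ :=
    walkValue_le_pow_of_closed hW hr hcyc (by omega) (by simpa using hvab)
  obtain ⟨k, j, hkn, hkj, hrest⟩ := ih (a + c) (by omega) (cutLoop v a ℓ)
  refine ⟨k, j + ℓ, hkn, by omega, ?_⟩
  calc walkValue W (a + ℓ + c) v
      = walkValue W ℓ (fun k => v (a + k)) * walkValue W (a + c) (cutLoop v a ℓ) :=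
        walkValue_eq_mul_cutLoop c hvab
    _ ≤ r ^ ℓ * (B ^ k * r ^ j) :=
        mul_le_mul hloop hrest (walkValue_nonneg hW _ _) (by positivity)
    _ = B ^ k * r ^ (j + ℓ) := by ring

theorem walkValue_add_le (hW : ∀ i j, 0 ≤ W i j) (hr : 0 ≤ r)
    (hcyc : ∀ (ℓ : ℕ) (c : ℕ → Fin n), IsCycle W ℓ c → walkValue W ℓ c ≤ r ^ ℓ)
    {B : ℝ} (hrB : r ≤ B) (hWB : ∀ i j, W i j ≤ B) (m : ℕ) (v : ℕ → Fin n) :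
    walkValue W (m + n) v ≤ B ^ n * r ^ m := by
  obtain ⟨k, j, hkn, hkj, hle⟩ := exists_walkValue_le_pow_mul_pow hW hr hcyc hWB (m + n) v
  have hB : 0 ≤ B := hr.trans hrB
  calc walkValue W (m + n) v ≤ B ^ k * r ^ j := hle
    _ = B ^ k * r ^ (n - k) * r ^ m := by rw [show j = n - k + m by omega, pow_add]; ring
    _ ≤ B ^ k * B ^ (n - k) * r ^ m := by gcongr
    _ = B ^ n * r ^ m := by rw [← pow_add, Nat.add_sub_cancel' hkn]

end Walks

theorem Matrix.sum_pow_mulVec_eq_sum_prod {ι R : Type*} [Fintype ι] [DecidableEq ι]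
    [CommSemiring R] (A : Matrix ι ι R) (m : ℕ) (f : ι → R) :
    ∑ i, (A ^ m *ᵥ f) i =
      ∑ u : Fin (m + 1) → ι, (∏ k : Fin m, A (u k.castSucc) (u k.succ)) * f (u (Fin.last m)) := by
  induction m generalizing f with
  | zero => simpa using ((Equiv.funUnique (Fin 1) ι).sum_comp f).symm
  | succ m ih =>
    rw [pow_succ, ← mulVec_mulVec, ih]
    conv_rhs => rw [← (Fin.snocEquiv fun _ => ι).sum_comp, Fintype.sum_prod_type, Finset.sum_comm]
    refine Finset.sum_congr rfl fun u _ => ?_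
    simp only [mulVec, dotProduct, Finset.mul_sum, Fin.snocEquiv_apply, Fin.prod_univ_castSucc,
      Fin.succ_castSucc, Fin.snoc_castSucc, Fin.snoc_last, Fin.succ_last]
    exact Finset.sum_congr rfl fun _ _ => by ring

lemma walkValue_comp_ofNat {n m : ℕ} (W : Matrix (Fin n) (Fin n) ℝ) (u : Fin (m + 1) → Fin n) :
    walkValue W m (fun k => u (Fin.ofNat (m + 1) k)) =
      ∏ k : Fin m, W (u k.castSucc) (u k.succ) := by
  rw [walkValue, ← Fin.prod_univ_eq_prod_range]
  refine Finset.prod_congr rfl fun k _ => ?_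
  congr 2 <;> ext <;> simp [Nat.mod_eq_of_lt, k.isLt]

lemma sum_pow_apply_le_of_walkValue_le {n m : ℕ} {W : Matrix (Fin n) (Fin n) ℝ} {M : ℝ}
    (h : ∀ v, walkValue W m v ≤ M) : ∑ i, ∑ j, (W ^ m) i j ≤ n ^ (m + 1) * M := by
  calc ∑ i, ∑ j, (W ^ m) i j
      = ∑ u : Fin (m + 1) → Fin n, walkValue W m (fun k => u (Fin.ofNat (m + 1) k)) := by
        simp only [walkValue_comp_ofNat]
        simpa [mulVec, dotProduct] using Matrix.sum_pow_mulVec_eq_sum_prod W m 1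
    _ ≤ ∑ _u : Fin (m + 1) → Fin n, M := Finset.sum_le_sum fun u _ => h _
    _ = n ^ (m + 1) * M := by simp

lemma norm_le_sum_norm_of_mulVec_eq_smul {ι 𝕜 : Type*} [Fintype ι] [NormedField 𝕜]
    {A : Matrix ι ι 𝕜} {μ : 𝕜} {x : ι → 𝕜} (hx : x ≠ 0) (h : A *ᵥ x = μ • x) :
    ‖μ‖ ≤ ∑ i, ∑ j, ‖A i j‖ := by
  refine le_of_mul_le_mul_right ?_ (norm_pos_iff.2 hx)
  rw [← norm_smul, ← h]
  refine (pi_norm_le_iff_of_nonneg (by positivity)).2 fun i => ?_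
  calc ‖(A *ᵥ x) i‖ ≤ ∑ j, ‖A i j‖ * ‖x‖ :=
        norm_sum_le_of_le _ fun j _ =>
          (norm_mul_le _ _).trans (by gcongr; exact norm_le_pi_norm x j)
    _ ≤ (∑ i, ∑ j, ‖A i j‖) * ‖x‖ := by
        rw [← Finset.sum_mul]
        exact mul_le_mul_of_nonneg_right (Finset.single_le_sum (f := fun i => ∑ j, ‖A i j‖)
          (fun _ _ => by positivity) (Finset.mem_univ i)) (norm_nonneg x)

lemma norm_pow_le_sum_pow_apply {ι : Type*} [Fintype ι] [DecidableEq ι] {W : Matrix ι ι ℝ}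
    (hW : ∀ i j, 0 ≤ W i j) {μ : ℂ} (hμ : (W.map Complex.ofReal).charpoly.IsRoot μ) (m : ℕ) :
    ‖μ‖ ^ m ≤ ∑ i, ∑ j, (W ^ m) i j := by
  have hev : Module.End.HasEigenvalue (toLin' (W.map Complex.ofReal)) μ := by
    rwa [Module.End.hasEigenvalue_iff_isRoot_charpoly, Matrix.charpoly_toLin']
  obtain ⟨x, hx⟩ := hev.exists_hasEigenvector
  have hxm : (W ^ m).map Complex.ofReal *ᵥ x = μ ^ m • x := by
    rw [show (W ^ m).map Complex.ofReal = (W.map Complex.ofReal) ^ m from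
      Matrix.map_pow W Complex.ofRealHom m, ← toLin'_apply, toLin'_pow]
    exact hx.pow_apply m
  simpa [norm_pow, abs_of_nonneg (pow_apply_nonneg hW m _ _)] using
    norm_le_sum_norm_of_mulVec_eq_smul hx.2 hxm

lemma le_of_pow_add_le_mul_pow {a b C : ℝ} (hb : 0 ≤ b) (k : ℕ)
    (h : ∀ m, a ^ (m + k) ≤ C * b ^ m) : a ≤ b := by
  by_contra! hba
  have ha : 0 < a := hb.trans_lt hba
  have hlim : Filter.Tendsto (fun m : ℕ => C * (b / a) ^ m) Filter.atTop (nhds 0) := by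
    simpa using (tendsto_pow_atTop_nhds_zero_of_lt_one (by positivity)
      ((div_lt_one ha).2 hba)).const_mul C
  have hbound : ∀ m : ℕ, a ^ k ≤ C * (b / a) ^ m := fun m => by
    rw [div_pow, mul_div_assoc', le_div_iff₀ (by positivity), ← pow_add, add_comm]
    exact h m
  exact (pow_pos ha k).not_ge (ge_of_tendsto' hlim hbound)

theorem specRad_le_of_cycle_bound_general {n : ℕ} (W : Matrix (Fin n) (Fin n) ℝ)
    (hW : ∀ i j, 0 ≤ W i j) (r : ℝ) (hr : 0 ≤ r)
    (hcyc : ∀ (ℓ : ℕ) (c : ℕ → Fin n), IsCycle W ℓ c → walkValue W ℓ c ≤ r ^ ℓ) :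
    specRad W ≤ n * r := by
  refine Real.sSup_le ?_ (by positivity)
  rintro _ ⟨μ, hμ, rfl⟩
  obtain ⟨B, hrB, hWB⟩ : ∃ B, r ≤ B ∧ ∀ i j, W i j ≤ B := by
    obtain ⟨B, hB⟩ := Finite.exists_le fun p : Fin n × Fin n => W p.1 p.2
    exact ⟨max r B, le_max_left r B, fun i j => (hB (i, j)).trans (le_max_right r B)⟩
  refine le_of_pow_add_le_mul_pow (C := n ^ (n + 1) * B ^ n) (by positivity) n fun m => ?_
  calc ‖μ‖ ^ (m + n) ≤ ∑ i, ∑ j, (W ^ (m + n)) i j := norm_pow_le_sum_pow_apply hW hμ _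
    _ ≤ n ^ (m + n + 1) * (B ^ n * r ^ m) :=
      sum_pow_apply_le_of_walkValue_le (walkValue_add_le hW hr hcyc hrB hWB m)
    _ = n ^ (n + 1) * B ^ n * (n * r) ^ m := by ring

/-- If every cycle of length `ℓ` of the digraph of the nonnegative matrix `W` has value at most
`r ^ ℓ`, then `ρ(W) ≤ n * r`. -/
theorem specRad_le_of_cycle_bound {n : ℕ} (hn : 1 ≤ n) (W : Matrix (Fin n) (Fin n) ℝ)
    (hW : ∀ i j, 0 ≤ W i j) (r : ℝ) (hr : 0 ≤ r)
    (hcyc : ∀ (ℓ : ℕ) (c : ℕ → Fin n), IsCycle W ℓ c → walkValue W ℓ c ≤ r ^ ℓ) :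
    specRad W ≤ n * r :=
  specRad_le_of_cycle_bound_general W hW r hr hcyc
end

section
/- Splitting criterion for two vertices: let a, b, c, d be nonnegative real numbers with a + d + √((a − d)² + 4bc) > 0 and let W be the 2×2 matrix with rows (a, b) and (c, d). Then the spectral cyclicality of W satisfies 𝐒 ≤ 1 if and only if bc ≤ ad, i.e. the two vertices are split exactly when the product of the loop values is at least the cycle value. -/
open Matrix BigOperators

/-! The Perron root of a nonnegative `2 × 2` matrix is `ρ = (a + d + √((a - d)² + 4bc)) / 2`, and
deleting either vertex leaves a `1 × 1` matrix whose spectral radius is the remaining loop value.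
Hence `𝐒 = (2ρ - a - d) / ρ`, so `𝐒 ≤ 1` means `ρ ≤ a + d`, i.e. `√((a - d)² + 4bc) ≤ a + d`,
which after squaring is `bc ≤ ad`. -/

noncomputable def spectralCyclicality {n : ℕ} (W : Matrix (Fin n) (Fin n) ℝ) : ℝ :=
  ∑ s, (specRad W - specRad (delSub W {s})) / specRad W

section SpectralRadius

variable {m : Type*} [Fintype m] [DecidableEq m]

lemma specRad_eq_of_forall_norm_le {W : Matrix m m ℝ} {r : ℝ} {μ₀ : ℂ}
    (hμ₀ : (W.map Complex.ofReal).charpoly.IsRoot μ₀) (hr : ‖μ₀‖ = r)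
    (hle : ∀ μ : ℂ, (W.map Complex.ofReal).charpoly.IsRoot μ → ‖μ‖ ≤ r) :
    specRad W = r :=
  IsGreatest.csSup_eq ⟨⟨μ₀, hμ₀, hr.symm⟩, by rintro _ ⟨μ, hμ, rfl⟩; exact hle μ hμ⟩

lemma specRad_of_unique [Unique m] (W : Matrix m m ℝ) :
    specRad W = |W default default| := by
  have hroot : ∀ μ : ℂ, (W.map Complex.ofReal).charpoly.IsRoot μ ↔ μ = W default default := by
    intro μ
    simp [Matrix.charpoly, Matrix.det_unique, Matrix.charmatrix_apply_eq, sub_eq_zero]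
  refine specRad_eq_of_forall_norm_le ((hroot _).2 rfl) (Complex.norm_real _) ?_
  intro μ hμ
  rw [(hroot μ).1 hμ, Complex.norm_real, Real.norm_eq_abs]

end SpectralRadius

lemma isRoot_charpoly_fin_two_iff (a b c d : ℝ) (hdisc : 0 ≤ (a - d) ^ 2 + 4 * b * c) (μ : ℂ) :
    (!![a, b; c, d].map Complex.ofReal).charpoly.IsRoot μ ↔
      μ = ((a + d + √((a - d) ^ 2 + 4 * b * c)) / 2 : ℝ) ∨
        μ = ((a + d - √((a - d) ^ 2 + 4 * b * c)) / 2 : ℝ) := by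
  set s := √((a - d) ^ 2 + 4 * b * c)
  have hs : (s : ℂ) ^ 2 = (a - d) ^ 2 + 4 * b * c := by
    exact_mod_cast Real.sq_sqrt hdisc
  have hfactor : μ ^ 2 - (a + d) * μ + (a * d - b * c) =
      (μ - ((a + d + s) / 2 : ℝ)) * (μ - ((a + d - s) / 2 : ℝ)) := by
    push_cast
    linear_combination (1 / 4 : ℂ) * hs
  rw [Matrix.charpoly_fin_two, Polynomial.IsRoot, Matrix.trace_fin_two, Matrix.det_fin_two]
  simp only [Polynomial.eval_add, Polynomial.eval_sub, Polynomial.eval_mul, Polynomial.eval_pow,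
    Polynomial.eval_X, Polynomial.eval_C, Matrix.map_apply, Matrix.of_apply, Matrix.cons_val',
    Matrix.cons_val_zero, Matrix.cons_val_one, Matrix.empty_val', Matrix.cons_val_fin_one]
  push_cast at hfactor ⊢
  rw [hfactor, mul_eq_zero, sub_eq_zero, sub_eq_zero]

lemma specRad_fin_two (a b c d : ℝ) (hdisc : 0 ≤ (a - d) ^ 2 + 4 * b * c) (htr : 0 ≤ a + d) :
    specRad !![a, b; c, d] = (a + d + √((a - d) ^ 2 + 4 * b * c)) / 2 := by
  have hs := Real.sqrt_nonneg ((a - d) ^ 2 + 4 * b * c)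
  have hρ : 0 ≤ (a + d + √((a - d) ^ 2 + 4 * b * c)) / 2 := by positivity
  refine specRad_eq_of_forall_norm_le ((isRoot_charpoly_fin_two_iff a b c d hdisc _).2 (.inl rfl))
    (by rw [Complex.norm_real, Real.norm_of_nonneg hρ]) ?_
  intro μ hμ
  rcases (isRoot_charpoly_fin_two_iff a b c d hdisc μ).1 hμ with rfl | rfl
  · rw [Complex.norm_real, Real.norm_of_nonneg hρ]
  · rw [Complex.norm_real, Real.norm_eq_abs, abs_le]
    constructor <;> linarith

instance uniqueNotMemSingletonFinTwo (s : Fin 2) :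
    Unique {i : Fin 2 // i ∉ ({s} : Finset (Fin 2))} where
  default := ⟨s.rev, by fin_cases s <;> decide⟩
  uniq := by fin_cases s <;> decide

lemma specRad_delSub_singleton_fin_two (W : Matrix (Fin 2) (Fin 2) ℝ) (s : Fin 2) :
    specRad (delSub W {s}) = |W s.rev s.rev| :=
  specRad_of_unique _

lemma spectralCyclicality_fin_two (W : Matrix (Fin 2) (Fin 2) ℝ) :
    spectralCyclicality W = (2 * specRad W - |W 0 0| - |W 1 1|) / specRad W := by
  rw [spectralCyclicality, Fin.sum_univ_two, specRad_delSub_singleton_fin_two,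
    specRad_delSub_singleton_fin_two, ← add_div]
  congr 1
  change (_ - |W 1 1|) + (_ - |W 0 0|) = _
  ring

lemma sqrt_discr_le_trace_iff {a b c d : ℝ} (htr : 0 ≤ a + d) :
    √((a - d) ^ 2 + 4 * b * c) ≤ a + d ↔ b * c ≤ a * d := by
  rw [Real.sqrt_le_left htr]
  constructor <;> intro h <;> linarith [show (a + d) ^ 2 - (a - d) ^ 2 = 4 * (a * d) by ring]

/-- **Splitting criterion for two vertices**: the spectral cyclicality of the nonnegative
`2 × 2` matrix with rows `(a, b)` and `(c, d)` is at most `1` if and only if `bc ≤ ad`. -/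
theorem splitting_criterion_two_by_two (a b c d : ℝ) (ha : 0 ≤ a) (hb : 0 ≤ b) (hc : 0 ≤ c)
    (hd : 0 ≤ d) (hpos : 0 < a + d + Real.sqrt ((a - d) ^ 2 + 4 * b * c)) :
    (∑ s : Fin 2,
        (specRad !![a, b; c, d] - specRad (delSub !![a, b; c, d] {s})) /
          specRad !![a, b; c, d]) ≤ 1 ↔ b * c ≤ a * d := by
  have htr : 0 ≤ a + d := add_nonneg ha hd
  have hρ := specRad_fin_two a b c d (by positivity) htr
  change spectralCyclicality _ ≤ 1 ↔ _
  rw [spectralCyclicality_fin_two, div_le_one (hρ ▸ half_pos hpos), hρ,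
    ← sqrt_discr_le_trace_iff htr]
  simp only [Matrix.of_apply, Matrix.cons_val_zero, Matrix.cons_val_one, Matrix.cons_val_fin_one,
    abs_of_nonneg ha, abs_of_nonneg hd]
  constructor <;> intro h <;> linarith
end
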